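/- Let (Φ, J, j) be a lax monoidal functor from a rigid monoidal category C to a monoidal abelian category D in which every object has a kernel. Fix X in C with dual X* and an object M in C, and let k : K → Φ(X) ⊗ Φ(M) be the kernel of J_{X,M}. Then the composite K → 𝟙 ⊗ K → Φ(𝟙) ⊗ K → Φ(X ⊗ X*) ⊗ K → Φ(X) ⊗ Φ(M), where the middle arrows are j⁻¹ ⊗ id and Φ(i_X) ⊗ id and the last arrow F is built from J, associativity, Φ of the evaluation e_X, and unitors (as in the rigidity argument), equals k. Consequently, if F vanishes on the image of J_{X,X*} ⊗ id_K and the image of Φ(i_X) ⊗ id_K is contained in the image of J_{X,X*} ⊗ id_K, then k = 0 and J_{X,M} is a monomorphism. -/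
import Mathlib


open CategoryTheory MonoidalCategory CategoryTheory.Limits
  CategoryTheory.Functor.LaxMonoidal

private lemma aux_unitor {D : Type*} [Category D] [MonoidalCategory D] {A B P : D}
    (f : 𝟙_ D ⟶ P) :
    (λ_ (A ⊗ B)).inv ≫ (f ▷ (A ⊗ B)) ≫ (α_ P A B).inv =
      ((λ_ A).inv ≫ f ▷ A) ▷ B := by
  rw [leftUnitor_tensor_inv, Category.assoc, associator_inv_naturality_left,
    Iso.hom_inv_id_assoc, comp_whiskerRight]

/-- Let `(Φ, J, j)` be a lax monoidal functor from a rigid monoidal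
category `C` to a monoidal abelian category `D`, let `X` have dual `Xᘁ`, let `M` be any
object and let `k : K ⟶ Φ(X) ⊗ Φ(M)` be the kernel of `J_{X,M} = μ Φ X M`.  Then the
composite `K → 𝟙 ⊗ K → Φ(𝟙) ⊗ K → Φ(X ⊗ Xᘁ) ⊗ K → Φ(X) ⊗ Φ(M)` (the last arrow being
the rigidity composite `F`) equals `k`; consequently, if `F` vanishes on the image of
`J_{X,Xᘁ} ▷ K` and the image of `Φ(i_X) ▷ K` is contained in the image of
`J_{X,Xᘁ} ▷ K`, then `k = 0` and `J_{X,M}` is a monomorphism. -/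
theorem stmt12 {C D : Type*} [Category C] [MonoidalCategory C] [RightRigidCategory C]
    [Category D] [MonoidalCategory D] [Abelian D]
    (Φ : C ⥤ D) [Φ.LaxMonoidal] (X M : C) :
    let K := kernel (μ Φ X M)
    let k : K ⟶ Φ.obj X ⊗ Φ.obj M := kernel.ι (μ Φ X M)
    let F : Φ.obj (X ⊗ Xᘁ) ⊗ K ⟶ Φ.obj X ⊗ Φ.obj M :=
      (Φ.obj (X ⊗ Xᘁ) ◁ k) ≫ (α_ (Φ.obj (X ⊗ Xᘁ)) (Φ.obj X) (Φ.obj M)).inv ≫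
        (μ Φ (X ⊗ Xᘁ) X ▷ Φ.obj M) ≫ (Φ.map (α_ X (Xᘁ) X).hom ▷ Φ.obj M) ≫
        (Φ.map (X ◁ ε_ X (Xᘁ)) ▷ Φ.obj M) ≫ (Φ.map (ρ_ X).hom ▷ Φ.obj M)
    ((λ_ K).inv ≫ (ε Φ ▷ K) ≫ (Φ.map (η_ X (Xᘁ)) ▷ K) ≫ F = k) ∧
      ((((μ Φ X (Xᘁ)) ▷ K) ≫ F = 0 ∧
          imageSubobject (Φ.map (η_ X (Xᘁ)) ▷ K) ≤ imageSubobject ((μ Φ X (Xᘁ)) ▷ K)) →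
        (k = 0 ∧ Mono (μ Φ X M))) := by
  intro K k F
  have key : (λ_ K).inv ≫ (ε Φ ▷ K) ≫ (Φ.map (η_ X (Xᘁ)) ▷ K) ≫ F = k := by
    show (λ_ K).inv ≫ (ε Φ ▷ K) ≫ (Φ.map (η_ X (Xᘁ)) ▷ K) ≫
      (Φ.obj (X ⊗ Xᘁ) ◁ k) ≫ (α_ (Φ.obj (X ⊗ Xᘁ)) (Φ.obj X) (Φ.obj M)).inv ≫
        (μ Φ (X ⊗ Xᘁ) X ▷ Φ.obj M) ≫ (Φ.map (α_ X (Xᘁ) X).hom ▷ Φ.obj M) ≫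
        (Φ.map (X ◁ ε_ X (Xᘁ)) ▷ Φ.obj M) ≫ (Φ.map (ρ_ X).hom ▷ Φ.obj M) = k
    have hg : (λ_ (Φ.obj X)).inv ≫ ((ε Φ ≫ Φ.map (η_ X (Xᘁ))) ▷ Φ.obj X) ≫
        μ Φ (X ⊗ Xᘁ) X ≫ Φ.map (α_ X (Xᘁ) X).hom ≫ Φ.map (X ◁ ε_ X (Xᘁ)) ≫
        Φ.map (ρ_ X).hom = 𝟙 (Φ.obj X) := by
      rw [comp_whiskerRight, Category.assoc, μ_natural_left_assoc, ← Φ.map_comp,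
        ← Φ.map_comp, ← Φ.map_comp]
      have zig : η_ X (Xᘁ) ▷ X ≫ ((α_ X (Xᘁ) X).hom ≫ (X ◁ ε_ X (Xᘁ) ≫ (ρ_ X).hom)) =
          (λ_ X).hom := by
        simp only [← Category.assoc]
        rw [Category.assoc (η_ X (Xᘁ) ▷ X), ExactPairing.evaluation_coevaluation,
          Category.assoc, Iso.inv_hom_id, Category.comp_id]
      rw [zig, left_unitality_inv_assoc, ← Φ.map_comp, Iso.inv_hom_id, Φ.map_id]
    calc (λ_ K).inv ≫ (ε Φ ▷ K) ≫ (Φ.map (η_ X (Xᘁ)) ▷ K) ≫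
        (Φ.obj (X ⊗ Xᘁ) ◁ k) ≫ (α_ (Φ.obj (X ⊗ Xᘁ)) (Φ.obj X) (Φ.obj M)).inv ≫
        (μ Φ (X ⊗ Xᘁ) X ▷ Φ.obj M) ≫ (Φ.map (α_ X (Xᘁ) X).hom ▷ Φ.obj M) ≫
        (Φ.map (X ◁ ε_ X (Xᘁ)) ▷ Φ.obj M) ≫ (Φ.map (ρ_ X).hom ▷ Φ.obj M)
        = (λ_ K).inv ≫ (𝟙_ D ◁ k) ≫
            (((ε Φ ≫ Φ.map (η_ X (Xᘁ))) ▷ (Φ.obj X ⊗ Φ.obj M)) ≫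
              (α_ (Φ.obj (X ⊗ Xᘁ)) (Φ.obj X) (Φ.obj M)).inv) ≫
            (μ Φ (X ⊗ Xᘁ) X ▷ Φ.obj M) ≫ (Φ.map (α_ X (Xᘁ) X).hom ▷ Φ.obj M) ≫
            (Φ.map (X ◁ ε_ X (Xᘁ)) ▷ Φ.obj M) ≫ (Φ.map (ρ_ X).hom ▷ Φ.obj M) := by
          rw [← comp_whiskerRight_assoc, ← whisker_exchange_assoc]
          simp only [Category.assoc]
      _ = k ≫ (((λ_ (Φ.obj X)).inv ≫ ((ε Φ ≫ Φ.map (η_ X (Xᘁ))) ▷ Φ.obj X) ≫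
            μ Φ (X ⊗ Xᘁ) X ≫ Φ.map (α_ X (Xᘁ) X).hom ≫ Φ.map (X ◁ ε_ X (Xᘁ)) ≫
            Φ.map (ρ_ X).hom) ▷ Φ.obj M) := by
          rw [← leftUnitor_inv_naturality_assoc, ← Category.assoc ((λ_ _).inv),
            aux_unitor]
          simp only [comp_whiskerRight, Category.assoc]
      _ = k := by rw [hg]; simp
  refine ⟨key, fun ⟨h1, h2⟩ => ?_⟩
  have harr1 : (imageSubobject ((μ Φ X (Xᘁ)) ▷ K)).arrow ≫ F = 0 := by
    rw [← cancel_epi (factorThruImageSubobject ((μ Φ X (Xᘁ)) ▷ K)),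
      imageSubobject_arrow_comp_assoc, h1, comp_zero]
  have hη : (Φ.map (η_ X (Xᘁ)) ▷ K) ≫ F = 0 := by
    rw [← imageSubobject_arrow_comp (Φ.map (η_ X (Xᘁ)) ▷ K), Category.assoc,
      ← Subobject.ofLE_arrow h2, Category.assoc, harr1, comp_zero, comp_zero]
  have hk : k = 0 := by
    rw [← key, hη]
    simp
  exact ⟨hk, Abelian.mono_of_kernel_ι_eq_zero _ hk⟩
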